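/- Let C ∈ ℂ^{2m×n} be partitioned into row blocks C = [C_q; C_p] with C_q, C_p ∈ ℂ^{m×n}, let B ∈ ℂ^{n×2m} be partitioned into column blocks B = [B_q B_p] with B_q, B_p ∈ ℂ^{n×m}, and let A ∈ ℂ^{n×n}. Assume C·A = (1/2)·C·B·C (the matrix form of the QND-interaction condition [L,H] = 0 for the controllable–observable subsystem in the quantum Kalman canonical form). Then: (i) C_q·Aᵏ·B_p = 0 for all integers k ≥ 0 if and only if C_q·B_p = 0 (this characterizes the BAE measurement of q_out with respect to p_in); and (ii) C_p·Aᵏ·B_q = 0 for all integers k ≥ 0 if and only if C_p·B_q = 0 (this characterizes the BAE measurement of p_out with respect to q_in). -/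

import Mathlib

open Matrix

private lemma lower_tri_pow {m : ℕ} (a c d : Matrix (Fin m) (Fin m) ℂ) :
    ∀ k : ℕ, ((fromBlocks a 0 c d) ^ (k + 1)).toBlocks₁₂ = 0 := by
  suffices h : ∀ k : ℕ, ∃ c', (fromBlocks a 0 c d) ^ (k + 1) =
      fromBlocks (a ^ (k + 1)) 0 c' (d ^ (k + 1)) by
    intro k
    obtain ⟨c', hc'⟩ := h k
    rw [hc', toBlocks_fromBlocks₁₂]
  intro k
  induction k with
  | zero => exact ⟨c, by simp⟩
  | succ k ih =>
    obtain ⟨c', hc'⟩ := ih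
    refine ⟨c' * a + d ^ (k + 1) * c, ?_⟩
    rw [pow_succ, hc', fromBlocks_multiply]
    simp [pow_succ]

private lemma upper_tri_pow {m : ℕ} (a b d : Matrix (Fin m) (Fin m) ℂ) :
    ∀ k : ℕ, ((fromBlocks a b 0 d) ^ (k + 1)).toBlocks₂₁ = 0 := by
  suffices h : ∀ k : ℕ, ∃ b', (fromBlocks a b 0 d) ^ (k + 1) =
      fromBlocks (a ^ (k + 1)) b' 0 (d ^ (k + 1)) by
    intro k
    obtain ⟨b', hb'⟩ := h k
    rw [hb', toBlocks_fromBlocks₂₁]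
  intro k
  induction k with
  | zero => exact ⟨b, by simp⟩
  | succ k ih =>
    obtain ⟨b', hb'⟩ := ih
    refine ⟨a ^ (k + 1) * b + b' * d, ?_⟩
    rw [pow_succ, hb', fromBlocks_multiply]
    simp [pow_succ]

/-- Kalman canonical form characterization of BAE under the QND-interaction
condition C·A = (1/2)·C·B·C, where C = [C_q; C_p] and B = [B_q B_p]:
all Markov parameters C_q·Aᵏ·B_p vanish iff C_q·B_p = 0, and likewise for
C_p·Aᵏ·B_q. -/
theorem stmt_15 {m n : ℕ} (Cq Cp : Matrix (Fin m) (Fin n) ℂ)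
    (Bq Bp : Matrix (Fin n) (Fin m) ℂ) (A : Matrix (Fin n) (Fin n) ℂ)
    (h : fromRows Cq Cp * A =
      (1/2 : ℂ) • (fromRows Cq Cp * fromCols Bq Bp * fromRows Cq Cp)) :
    ((∀ k : ℕ, Cq * A ^ k * Bp = 0) ↔ Cq * Bp = 0) ∧
    ((∀ k : ℕ, Cp * A ^ k * Bq = 0) ↔ Cp * Bq = 0) := by
  set C := fromRows Cq Cp
  set B := fromCols Bq Bp
  set N := C * B with hN
  have hblock : ∀ k : ℕ, C * A ^ k * B =
      fromBlocks (Cq * A ^ k * Bq) (Cq * A ^ k * Bp) (Cp * A ^ k * Bq) (Cp * A ^ k * Bp) := by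
    intro k
    show fromRows Cq Cp * A ^ k * fromCols Bq Bp = _
    rw [fromRows_mul, fromRows_mul_fromCols]
  have hNblock : N = fromBlocks (Cq * Bq) (Cq * Bp) (Cp * Bq) (Cp * Bp) := by
    simpa using hblock 0
  clear_value N
  -- key: C * A ^ k = ((1/2 : ℂ) • N) ^ k * C
  have key : ∀ k : ℕ, C * A ^ k = ((1/2 : ℂ) • N) ^ k * C := by
    intro k
    induction k with
    | zero => simp
    | succ k ih =>
      rw [pow_succ, ← Matrix.mul_assoc, ih, Matrix.mul_assoc, h, Matrix.mul_smul, pow_succ,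
        Matrix.mul_assoc, Matrix.smul_mul, Matrix.mul_smul]
  have key2 : ∀ k : ℕ, C * A ^ k * B = ((1/2 : ℂ) ^ k) • N ^ (k + 1) := by
    intro k
    rw [key k, smul_pow, Matrix.smul_mul, Matrix.smul_mul, Matrix.mul_assoc, pow_succ, ← hN]
  constructor
  · constructor
    · intro hk; simpa using hk 0
    · intro h0 k
      have := key2 k
      rw [hblock k] at this
      have := congrArg toBlocks₁₂ this
      rw [toBlocks_fromBlocks₁₂] at this
      rw [this, hNblock, h0]
      have := lower_tri_pow (Cq * Bq) (Cp * Bq) (Cp * Bp) k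
      simp only [toBlocks₁₂] at this ⊢
      ext i j
      have := congrFun (congrFun this i) j
      simp only [Matrix.smul_apply, Matrix.of_apply] at *
      simp [this]
  · constructor
    · intro hk; simpa using hk 0
    · intro h0 k
      have := key2 k
      rw [hblock k] at this
      have := congrArg toBlocks₂₁ this
      rw [toBlocks_fromBlocks₂₁] at this
      rw [this, hNblock, h0]
      have := upper_tri_pow (Cq * Bq) (Cq * Bp) (Cp * Bp) k
      simp only [toBlocks₂₁] at this ⊢
      ext i j
      have := congrFun (congrFun this i) j
      simp only [Matrix.smul_apply, Matrix.of_apply] at *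
      simp [this]
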